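/- Let n ≥ 1, μ̃ ∈ ℝⁿ, Σ̃ a positive semidefinite n×n matrix, and θ ≥ 0. Suppose λ ≥ 0, ε ≥ 0, γ ∈ ℝⁿ, Γ is a symmetric n×n matrix, and Z is a positive semidefinite n×n matrix such that the block matrices [[λI − Γ, γ + λμ̃], [(γ + λμ̃)ᵀ, ε]] and [[λI − Γ, λΣ̃^{1/2}], [λΣ̃^{1/2}, Z]] are positive semidefinite. Then for every μ ∈ ℝⁿ and every n×n matrix M such that M − μμᵀ is positive semidefinite and ‖μ − μ̃‖₂² + B²(M − μμᵀ, Σ̃) ≤ θ², one has 2γᵀμ + Tr(ΓM) ≤ λ(θ² − ‖μ̃‖₂² − Tr(Σ̃)) + ε + Tr(Z). -/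

import Mathlib

set_option maxHeartbeats 1000000


open Matrix
open scoped Classical

/-- The positive semidefinite square root of a matrix (junk value `0` if the matrix is
not positive semidefinite). -/
noncomputable def psdSqrt {n : ℕ} (A : Matrix (Fin n) (Fin n) ℝ) :
    Matrix (Fin n) (Fin n) ℝ :=
  if h : A.PosSemidef then
    (h.1.eigenvectorUnitary : Matrix (Fin n) (Fin n) ℝ) * Matrix.diagonal (Real.sqrt ∘ h.1.eigenvalues) *
      (star h.1.eigenvectorUnitary : Matrix (Fin n) (Fin n) ℝ) else 0

/-- The squared Gelbrich/Bures distance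
`B²(Σ₁, Σ₂) = Tr[Σ₁ + Σ₂ − 2(Σ₁^{1/2} Σ₂ Σ₁^{1/2})^{1/2}]`. -/
noncomputable def Bsq {n : ℕ} (S1 S2 : Matrix (Fin n) (Fin n) ℝ) : ℝ :=
  (S1 + S2 - (2 : ℝ) • psdSqrt (psdSqrt S1 * S2 * psdSqrt S1)).trace

/-- The `(n+1) × (n+1)` block matrix `[[A, b], [bᵀ, c]]`. -/
def blk1 {n : ℕ} (A : Matrix (Fin n) (Fin n) ℝ) (b : Fin n → ℝ) (c : ℝ) :
    Matrix (Fin n ⊕ Fin 1) (Fin n ⊕ Fin 1) ℝ :=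
  Matrix.fromBlocks A (Matrix.replicateCol (Fin 1) b) (Matrix.replicateRow (Fin 1) b) (Matrix.of fun _ _ => c)

lemma psdSqrt_posSemidef {n : ℕ} {A : Matrix (Fin n) (Fin n) ℝ} (h : A.PosSemidef) :
    (psdSqrt A).PosSemidef := by
  rw [psdSqrt, dif_pos h]
  have hd : (Matrix.diagonal (Real.sqrt ∘ h.1.eigenvalues)).PosSemidef :=
    Matrix.PosSemidef.diagonal (fun i => Real.sqrt_nonneg _)
  exact hd.mul_mul_conjTranspose_same _

lemma psdSqrt_mul_self {n : ℕ} {A : Matrix (Fin n) (Fin n) ℝ} (h : A.PosSemidef) :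
    psdSqrt A * psdSqrt A = A := by
  rw [psdSqrt, dif_pos h]
  have hU := (Matrix.mem_unitaryGroup_iff').mp h.1.eigenvectorUnitary.2
  set U : Matrix (Fin n) (Fin n) ℝ := (h.1.eigenvectorUnitary : Matrix (Fin n) (Fin n) ℝ)
  have hDD : Matrix.diagonal (Real.sqrt ∘ h.1.eigenvalues) *
      Matrix.diagonal (Real.sqrt ∘ h.1.eigenvalues) = Matrix.diagonal h.1.eigenvalues := by
    rw [Matrix.diagonal_mul_diagonal]
    congr 1
    funext i
    exact Real.mul_self_sqrt (h.eigenvalues_nonneg i)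
  calc U * Matrix.diagonal (Real.sqrt ∘ h.1.eigenvalues) * star U *
        (U * Matrix.diagonal (Real.sqrt ∘ h.1.eigenvalues) * star U)
      = U * (Matrix.diagonal (Real.sqrt ∘ h.1.eigenvalues) * (star U * U) *
        Matrix.diagonal (Real.sqrt ∘ h.1.eigenvalues)) * star U := by
        simp only [Matrix.mul_assoc]
    _ = U * Matrix.diagonal h.1.eigenvalues * star U := by
        rw [hU, Matrix.mul_one, hDD]
    _ = A := by
        conv_rhs => rw [h.1.spectral_theorem]
        simp [U]

lemma psd_trace_nonneg {m : Type*} [Fintype m] [DecidableEq m] {A : Matrix m m ℝ}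
    (hA : A.PosSemidef) : 0 ≤ A.trace := by
  have h : ∀ i, 0 ≤ A i i := fun i => by
    have := hA.dotProduct_mulVec_nonneg (Pi.single i 1)
    simpa [Matrix.mulVec, dotProduct, Pi.single_apply] using this
  exact Finset.sum_nonneg fun i _ => h i

lemma trace_fromBlocks' {m : Type*} [Fintype m] (A : Matrix m m ℝ) (B C : Matrix m m ℝ)
    (D : Matrix m m ℝ) : (Matrix.fromBlocks A B C D).trace = A.trace + D.trace := by
  simp [Matrix.trace, Fintype.sum_sum_type, Matrix.fromBlocks]

lemma block_trace_ineq {n : ℕ} {A B1 B2 C : Matrix (Fin n) (Fin n) ℝ}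
    (hQ : (Matrix.fromBlocks A B1 B2 C).PosSemidef) (X Y : Matrix (Fin n) (Fin n) ℝ) :
    0 ≤ (Xᵀ * A * X).trace + (Xᵀ * B1 * Y).trace + (Yᵀ * B2 * X).trace + (Yᵀ * C * Y).trace := by
  have h := psd_trace_nonneg (hQ.conjTranspose_mul_mul_same
    (Matrix.fromBlocks X (0 : Matrix (Fin n) (Fin n) ℝ) Y 0))
  rw [Matrix.fromBlocks_conjTranspose] at h
  simp only [Matrix.fromBlocks_multiply, Matrix.conjTranspose_zero] at h
  rw [trace_fromBlocks'] at h
  simp only [Matrix.mul_zero, Matrix.zero_mul, add_zero, zero_add,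
    Matrix.add_mul, Matrix.mul_add, Matrix.trace_add, Matrix.trace_zero] at h
  have hc : ∀ M : Matrix (Fin n) (Fin n) ℝ, Mᴴ = Mᵀ := fun M => rfl
  simp only [hc] at h
  linarith [h]

lemma matrix_part {n : ℕ} (SigT Γ Z S : Matrix (Fin n) (Fin n) ℝ) (lam : ℝ)
    (hSigT : SigT.PosSemidef) (hS : S.PosSemidef) (hZ : Z.PosSemidef)
    (h2 : (Matrix.fromBlocks (lam • (1 : Matrix (Fin n) (Fin n) ℝ) - Γ)
        (lam • psdSqrt SigT) (lam • psdSqrt SigT) Z).PosSemidef) :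
    (Γ * S).trace ≤ lam * S.trace
      - 2 * lam * (psdSqrt (psdSqrt S * SigT * psdSqrt S)).trace + Z.trace := by
  classical
  set sS := psdSqrt S with hsSdef
  set sT := psdSqrt SigT with hsTdef
  have hpsS : psdSqrt S = sS := rfl
  have hpsT : psdSqrt SigT = sT := rfl
  have hsS_symm : sSᵀ = sS := (psdSqrt_posSemidef hS).1
  have hsT_symm : sTᵀ = sT := (psdSqrt_posSemidef hSigT).1
  have hsSsS : sS * sS = S := psdSqrt_mul_self hS
  have hsTsT : sT * sT = SigT := psdSqrt_mul_self hSigT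
  have hG2 : (sS * SigT * sS).PosSemidef := by
    have := hSigT.conjTranspose_mul_mul_same sS
    rwa [show sSᴴ = sS from hsS_symm] at this
  set G := psdSqrt (sS * SigT * sS) with hGdef
  have hpsG : psdSqrt (psdSqrt S * SigT * psdSqrt S) = G := rfl
  have hGpsd : G.PosSemidef := psdSqrt_posSemidef hG2
  have hGG : G * G = sS * SigT * sS := psdSqrt_mul_self hG2
  -- spectral decomposition of G
  have hGh := hGpsd.1
  set Q : Matrix (Fin n) (Fin n) ℝ := (hGh.eigenvectorUnitary : Matrix (Fin n) (Fin n) ℝ) with hQdef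
  set d : Fin n → ℝ := hGh.eigenvalues with hddef
  have hQQ : Qᵀ * Q = 1 := by
    have := (Matrix.mem_unitaryGroup_iff').mp hGh.eigenvectorUnitary.2
    simpa [Matrix.star_eq_conjTranspose] using this
  have hGspec : G = Q * Matrix.diagonal d * Qᵀ := by
    have := hGh.spectral_theorem
    simpa [Matrix.star_eq_conjTranspose, Unitary.conjStarAlgAut_apply] using this
  have hconj : ∀ E F : Matrix (Fin n) (Fin n) ℝ,
      (Q * E * Qᵀ) * (Q * F * Qᵀ) = Q * (E * F) * Qᵀ := by
    intro E F
    simp only [Matrix.mul_assoc]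
    rw [show Qᵀ * (Q * (F * Qᵀ)) = F * Qᵀ by rw [← Matrix.mul_assoc, hQQ, Matrix.one_mul]]
  set dp : Fin n → ℝ := fun i => if d i = 0 then 0 else (d i)⁻¹ with hdpdef
  set B : Matrix (Fin n) (Fin n) ℝ := sT * sS with hBdef
  have hBT : Bᵀ = sS * sT := by rw [hBdef, Matrix.transpose_mul, hsS_symm, hsT_symm]
  have hBTB : Bᵀ * B = Q * (Matrix.diagonal d * Matrix.diagonal d) * Qᵀ := by
    rw [← hconj, ← hGspec, hGG, hBT, hBdef]
    calc sS * sT * (sT * sS) = sS * (sT * sT) * sS := by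
          simp only [Matrix.mul_assoc]
      _ = sS * SigT * sS := by rw [hsTsT]
  set N : Matrix (Fin n) (Fin n) ℝ := Q * Matrix.diagonal dp * Qᵀ with hNdef
  set V : Matrix (Fin n) (Fin n) ℝ := B * N with hVdef
  have hNsymm : Nᵀ = N := by
    rw [hNdef]
    simp [Matrix.transpose_mul, Matrix.diagonal_transpose, Matrix.mul_assoc]
  have hVT : Vᵀ = N * Bᵀ := by rw [hVdef, Matrix.transpose_mul, hNsymm]
  have hscal1 : (fun i => dp i * (d i * d i)) = d := by
    funext i
    show (if d i = 0 then (0:ℝ) else (d i)⁻¹) * (d i * d i) = d i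
    by_cases h : d i = 0
    · simp [h]
    · rw [if_neg h]; field_simp
  have hdpd : Matrix.diagonal dp * (Matrix.diagonal d * Matrix.diagonal d)
      = Matrix.diagonal d := by
    rw [Matrix.diagonal_mul_diagonal, Matrix.diagonal_mul_diagonal]
    exact congrArg Matrix.diagonal hscal1
  have hVTB : Vᵀ * B = G := by
    rw [hVT, Matrix.mul_assoc, hBTB, hNdef, hconj, hdpd, hGspec]
  set P : Matrix (Fin n) (Fin n) ℝ := V * Vᵀ with hPdef
  have hPval : P = B * (Q * (Matrix.diagonal dp * Matrix.diagonal dp) * Qᵀ) * Bᵀ := by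
    rw [hPdef, hVdef, hVT, hNdef, show B * (Q * Matrix.diagonal dp * Qᵀ) *
      (Q * Matrix.diagonal dp * Qᵀ * Bᵀ) = B * ((Q * Matrix.diagonal dp * Qᵀ) *
      (Q * Matrix.diagonal dp * Qᵀ)) * Bᵀ by simp only [Matrix.mul_assoc], hconj]
  have hPsymm : Pᵀ = P := by
    rw [hPdef, Matrix.transpose_mul, Matrix.transpose_transpose]
  have hPP : P * P = P := by
    rw [hPval]
    calc B * (Q * (Matrix.diagonal dp * Matrix.diagonal dp) * Qᵀ) * Bᵀ *
          (B * (Q * (Matrix.diagonal dp * Matrix.diagonal dp) * Qᵀ) * Bᵀ)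
        = B * ((Q * (Matrix.diagonal dp * Matrix.diagonal dp) * Qᵀ) * ((Bᵀ * B) *
          (Q * (Matrix.diagonal dp * Matrix.diagonal dp) * Qᵀ))) * Bᵀ := by
          simp only [Matrix.mul_assoc]
      _ = B * (Q * (Matrix.diagonal dp * Matrix.diagonal dp) * Qᵀ) * Bᵀ := by
          rw [hBTB, hconj, hconj]
          have hscal2 : (fun i => dp i * dp i * (d i * d i * (dp i * dp i)))
              = fun i => dp i * dp i := by
            funext i
            show (if d i = 0 then (0:ℝ) else (d i)⁻¹) * (if d i = 0 then (0:ℝ) else (d i)⁻¹)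
              * (d i * d i * ((if d i = 0 then (0:ℝ) else (d i)⁻¹)
                * (if d i = 0 then (0:ℝ) else (d i)⁻¹)))
              = (if d i = 0 then (0:ℝ) else (d i)⁻¹) * (if d i = 0 then (0:ℝ) else (d i)⁻¹)
            by_cases h : d i = 0
            · simp [h]
            · rw [if_neg h]; field_simp
          simp only [Matrix.diagonal_mul_diagonal]
          rw [hscal2]
  have hIP : ((1 : Matrix (Fin n) (Fin n) ℝ) - P).PosSemidef := by
    have hsym : ((1 : Matrix (Fin n) (Fin n) ℝ) - P)ᴴ = 1 - P := by
      have : ((1 : Matrix (Fin n) (Fin n) ℝ) - P)ᵀ = 1 - P := by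
        rw [Matrix.transpose_sub, Matrix.transpose_one, hPsymm]
      exact this
    have hid : ((1 : Matrix (Fin n) (Fin n) ℝ) - P) * (1 - P) = 1 - P := by
      simp only [Matrix.sub_mul, Matrix.mul_sub, Matrix.one_mul, Matrix.mul_one, hPP]
      abel
    have := Matrix.posSemidef_conjTranspose_mul_self ((1 : Matrix (Fin n) (Fin n) ℝ) - P)
    rwa [hsym, hid] at this
  have hZP : (Vᵀ * Z * V).trace ≤ Z.trace := by
    have h1 : (Vᵀ * Z * V).trace = (P * Z).trace := by
      rw [Matrix.trace_mul_cycle, ← hPdef]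
    have hsZ : psdSqrt Z * psdSqrt Z = Z := psdSqrt_mul_self hZ
    have hsZsym : (psdSqrt Z)ᴴ = psdSqrt Z := (psdSqrt_posSemidef hZ).1
    have h2' : ((psdSqrt Z)ᴴ * (1 - P) * psdSqrt Z).trace = Z.trace - (P * Z).trace := by
      rw [hsZsym]
      calc ((psdSqrt Z) * (1 - P) * psdSqrt Z).trace
          = ((psdSqrt Z) * (psdSqrt Z) * (1 - P)).trace := by
            rw [Matrix.trace_mul_cycle]
        _ = (Z * (1 - P)).trace := by rw [hsZ]
        _ = Z.trace - (P * Z).trace := by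
            rw [Matrix.mul_sub, Matrix.mul_one, Matrix.trace_sub, Matrix.trace_mul_comm]
    have h3 := psd_trace_nonneg (hIP.conjTranspose_mul_mul_same (psdSqrt Z))
    linarith [h1, h2', h3]
  -- apply the block trace inequality with X = sS, Y = -V
  have hmain := block_trace_ineq h2 sS (-V)
  have e1 : (sSᵀ * (lam • (1 : Matrix (Fin n) (Fin n) ℝ) - Γ) * sS).trace
      = lam * S.trace - (Γ * S).trace := by
    rw [hsS_symm, Matrix.mul_sub, Matrix.sub_mul, Matrix.trace_sub, Matrix.mul_smul,
      Matrix.mul_one, Matrix.smul_mul, hsSsS, Matrix.trace_smul, smul_eq_mul,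
      Matrix.trace_mul_cycle sS Γ sS, hsSsS, Matrix.trace_mul_comm]
  have etr : (sS * sT * V).trace = G.trace := by
    have hBT2 : (sS * sT)ᵀ = B := by
      rw [Matrix.transpose_mul, hsS_symm, hsT_symm, hBdef]
    have h' : (sS * sT * V)ᵀ = Vᵀ * B := by
      rw [Matrix.transpose_mul, hBT2]
    calc (sS * sT * V).trace = ((sS * sT * V)ᵀ).trace := (Matrix.trace_transpose _).symm
      _ = (Vᵀ * B).trace := by rw [h']
      _ = G.trace := by rw [hVTB]
  have e2 : (sSᵀ * (lam • sT) * (-V)).trace = -(lam * G.trace) := by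
    rw [hsS_symm, Matrix.mul_smul, Matrix.smul_mul, Matrix.mul_neg, Matrix.trace_smul,
      Matrix.trace_neg, smul_eq_mul, etr, mul_neg]
  have e3 : ((-V)ᵀ * (lam • sT) * sS).trace = -(lam * G.trace) := by
    have h3' : Vᵀ * sT * sS = G := by rw [Matrix.mul_assoc, ← hBdef, hVTB]
    rw [Matrix.transpose_neg, Matrix.neg_mul, Matrix.neg_mul, Matrix.trace_neg,
      Matrix.mul_smul, Matrix.smul_mul, Matrix.trace_smul, smul_eq_mul, h3']
  have e4 : ((-V)ᵀ * Z * (-V)).trace = (Vᵀ * Z * V).trace := by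
    rw [Matrix.transpose_neg, Matrix.neg_mul, Matrix.neg_mul, Matrix.mul_neg, neg_neg]
  rw [e1, e2, e3, e4] at hmain
  linarith [hmain, hZP]

lemma vector_part {n : ℕ} (γ muT : Fin n → ℝ) (Γ : Matrix (Fin n) (Fin n) ℝ) (lam ε : ℝ)
    (h1 : (blk1 (lam • (1 : Matrix (Fin n) (Fin n) ℝ) - Γ) (γ + lam • muT) ε).PosSemidef)
    (μ : Fin n → ℝ) :
    2 * (γ ⬝ᵥ μ) + μ ⬝ᵥ (Γ *ᵥ μ) ≤ lam * (μ ⬝ᵥ μ) - 2 * lam * (muT ⬝ᵥ μ) + ε := by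
  have h := h1.dotProduct_mulVec_nonneg (Sum.elim μ (fun _ => (-1 : ℝ)))
  rw [blk1, Matrix.fromBlocks_mulVec] at h
  rw [show (star (Sum.elim μ fun _ => (-1:ℝ))) = Sum.elim μ (fun _ => (-1:ℝ)) from rfl] at h
  rw [sumElim_dotProduct_sumElim] at h
  simp only [Sum.elim_comp_inl, Sum.elim_comp_inr] at h
  have hcol : (Matrix.replicateCol (Fin 1) (γ + lam • muT)) *ᵥ (fun _ => (-1:ℝ))
      = -(γ + lam • muT) := by
    funext i
    simp [Matrix.mulVec, dotProduct, Matrix.replicateCol]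
  have hrow : (Matrix.replicateRow (Fin 1) (γ + lam • muT)) *ᵥ μ
      = (fun _ : Fin 1 => (γ + lam • muT) ⬝ᵥ μ) := by
    funext i
    simp [Matrix.mulVec, dotProduct, Matrix.replicateRow]
  have hof : (Matrix.of fun _ _ => ε : Matrix (Fin 1) (Fin 1) ℝ) *ᵥ (fun _ => (-1:ℝ))
      = (fun _ : Fin 1 => -ε) := by
    funext i
    simp [Matrix.mulVec, dotProduct]
  rw [hcol, hrow, hof] at h
  have hq : μ ⬝ᵥ ((lam • (1 : Matrix (Fin n) (Fin n) ℝ) - Γ) *ᵥ μ + -(γ + lam • muT))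
      = lam * (μ ⬝ᵥ μ) - μ ⬝ᵥ (Γ *ᵥ μ) - (γ ⬝ᵥ μ) - lam * (muT ⬝ᵥ μ) := by
    rw [dotProduct_add, Matrix.sub_mulVec, dotProduct_sub, Matrix.smul_mulVec,
      Matrix.one_mulVec, dotProduct_smul, dotProduct_neg, dotProduct_add,
      dotProduct_smul, smul_eq_mul, smul_eq_mul, dotProduct_comm μ γ,
      dotProduct_comm μ muT]
    ring
  have hb : (γ + lam • muT) ⬝ᵥ μ = γ ⬝ᵥ μ + lam * (muT ⬝ᵥ μ) := by
    rw [add_dotProduct, smul_dotProduct, smul_eq_mul]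
  have hq2 : (fun _ : Fin 1 => (-1:ℝ)) ⬝ᵥ ((fun _ => (γ + lam • muT) ⬝ᵥ μ) + fun _ => -ε)
      = -((γ ⬝ᵥ μ) + lam * (muT ⬝ᵥ μ)) + ε := by
    simp only [hb, dotProduct, Fin.sum_univ_one, Pi.add_apply, Pi.smul_apply,
      smul_eq_mul]
    rw [show (∑ x, (γ x + lam * muT x) * μ x)
        = ∑ x, (γ x * μ x + lam * (muT x * μ x)) from
        Finset.sum_congr rfl fun x _ => by ring, Finset.sum_add_distrib, ← Finset.mul_sum]
    ring
  rw [hq, hq2] at h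
  linarith [h]


/-- feasibility of the two linear matrix inequalities implies the
support-function bound `2γᵀμ + Tr(ΓM) ≤ λ(θ² − ‖μ̃‖₂² − Tr(Σ̃)) + ε + Tr(Z)` on the
Gelbrich moment uncertainty set. -/
theorem support_function_bound
    (n : ℕ) (hn : 1 ≤ n) (muT : Fin n → ℝ) (SigT : Matrix (Fin n) (Fin n) ℝ)
    (hSigT : SigT.PosSemidef) (θ : ℝ) (hθ : 0 ≤ θ)
    (lam ε : ℝ) (hlam : 0 ≤ lam) (hε : 0 ≤ ε)
    (γ : Fin n → ℝ) (Γ : Matrix (Fin n) (Fin n) ℝ) (hΓ : Γ.IsSymm)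
    (Z : Matrix (Fin n) (Fin n) ℝ) (hZ : Z.PosSemidef)
    (h1 : (blk1 (lam • (1 : Matrix (Fin n) (Fin n) ℝ) - Γ) (γ + lam • muT) ε).PosSemidef)
    (h2 : (Matrix.fromBlocks (lam • (1 : Matrix (Fin n) (Fin n) ℝ) - Γ)
        (lam • psdSqrt SigT) (lam • psdSqrt SigT) Z).PosSemidef) :
    ∀ (μ : Fin n → ℝ) (M : Matrix (Fin n) (Fin n) ℝ),
      (M - Matrix.vecMulVec μ μ).PosSemidef →
      (∑ i, (μ i - muT i) ^ 2) + Bsq (M - Matrix.vecMulVec μ μ) SigT ≤ θ ^ 2 →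
      2 * (γ ⬝ᵥ μ) + (Γ * M).trace ≤
        lam * (θ ^ 2 - (∑ i, (muT i) ^ 2) - SigT.trace) + ε + Z.trace := by
  intro μ M hS hcon
  set S : Matrix (Fin n) (Fin n) ℝ := M - Matrix.vecMulVec μ μ with hSdef
  set K : ℝ := (psdSqrt (psdSqrt S * SigT * psdSqrt S)).trace with hKdef
  have vp := vector_part γ muT Γ lam ε h1 μ
  have mp := matrix_part SigT Γ Z S lam hSigT hS hZ h2
  -- Bsq value
  have hBsq : Bsq S SigT = S.trace + SigT.trace - 2 * K := by
    rw [Bsq, Matrix.trace_sub, Matrix.trace_add, Matrix.trace_smul, smul_eq_mul, hKdef]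
  -- trace of Γ * M
  have htm : (Γ * M).trace = μ ⬝ᵥ (Γ *ᵥ μ) + (Γ * S).trace := by
    have hM : M = S + Matrix.vecMulVec μ μ := by rw [hSdef, sub_add_cancel]
    have hvv : (Γ * Matrix.vecMulVec μ μ).trace = μ ⬝ᵥ (Γ *ᵥ μ) := by
      simp only [Matrix.trace, Matrix.diag_apply, Matrix.mul_apply, Matrix.vecMulVec_apply,
        dotProduct, Matrix.mulVec, Finset.mul_sum]
      exact Finset.sum_congr rfl fun i _ => Finset.sum_congr rfl fun j _ => by ring
    rw [hM, Matrix.mul_add, Matrix.trace_add, hvv]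
    ring
  -- expand the norm
  have hexp : (∑ i, (μ i - muT i) ^ 2)
      = (μ ⬝ᵥ μ) - 2 * (muT ⬝ᵥ μ) + ∑ i, (muT i) ^ 2 := by
    simp only [dotProduct]
    rw [Finset.mul_sum, ← Finset.sum_sub_distrib, ← Finset.sum_add_distrib]
    exact Finset.sum_congr rfl fun i _ => by ring
  rw [hBsq] at hcon
  have hc2 : (μ ⬝ᵥ μ) - 2 * (muT ⬝ᵥ μ) + S.trace - 2 * K
      ≤ θ ^ 2 - (∑ i, (muT i) ^ 2) - SigT.trace := by linarith [hcon, hexp]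
  have hm := mul_le_mul_of_nonneg_left hc2 hlam
  rw [htm]
  nlinarith [vp, mp, hm]
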